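/- If P(z) is a polynomial of degree n, then for every r ≥ 1, max_{|z|=r} |z·P''(z) + P'(z)| ≤ n²·r^{n−1} · max_{|z|=1} |P(z)|. -/

import Mathlib

/-!
The combination `z P'' + P'` is the derivative of `S = X * P'`, which again has degree at most `n`.
So the theorem is Bernstein's inequality `|Q'(z)| ≤ m |z|^(m-1) max_(|w|=1) |Q(w)|` for
`deg Q ≤ m` and `|z| ≥ 1`, applied twice: on the unit circle to `P`, which gives
`max_(|w|=1) |S(w)| ≤ n max_(|w|=1) |P(w)|`, and at `z` to `S`.

Bernstein's inequality is proved through Gauss–Lucas. If `|c| > max_(|w|=1) |Q(w)|`, the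
maximum modulus principle applied to the reversed polynomial gives `|Q(x)| ≤ |x|^m max |Q|`
for `|x| ≥ 1`, so all roots of `c X^m - Q` lie in the open unit disk, hence so do the roots
of its derivative `m c X^(m-1) - Q'`. A value of `Q'(z)` violating the inequality would
produce such a `c` with `Q'(z) = m c z^(m-1)`.
-/

open Polynomial Metric

/-- The maximum of `|P(w)|` over the unit circle `|w| = 1`. -/
noncomputable def maxMod (P : Polynomial ℂ) : ℝ :=
  sSup ((fun w => ‖P.eval w‖) '' {w : ℂ | ‖w‖ = 1})

theorem norm_eval_le_maxMod (Q : ℂ[X]) {w : ℂ} (hw : ‖w‖ = 1) :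
    ‖Q.eval w‖ ≤ maxMod Q := by
  refine le_csSup ?_ ⟨w, hw, rfl⟩
  have hsphere : {w : ℂ | ‖w‖ = 1} = sphere 0 1 := by ext; simp
  rw [hsphere]
  exact ((isCompact_sphere 0 1).image (by fun_prop)).bddAbove

theorem maxMod_le (Q : ℂ[X]) {B : ℝ} (h : ∀ w : ℂ, ‖w‖ = 1 → ‖Q.eval w‖ ≤ B) :
    maxMod Q ≤ B := by
  refine csSup_le ⟨_, ⟨1, by simp, rfl⟩⟩ ?_
  rintro _ ⟨w, hw, rfl⟩
  exact h w hw

theorem norm_eval_le_maxMod_of_norm_le_one (Q : ℂ[X]) {z : ℂ} (hz : ‖z‖ ≤ 1) :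
    ‖Q.eval z‖ ≤ maxMod Q := by
  refine Complex.norm_le_of_forall_mem_frontier_norm_le (isBounded_ball (x := 0) (r := 1))
    Q.differentiable.diffContOnCl (fun w hw => ?_) ?_
  · rw [frontier_ball 0 one_ne_zero, mem_sphere_zero_iff_norm] at hw
    exact norm_eval_le_maxMod Q hw
  · rwa [closure_ball 0 one_ne_zero, mem_closedBall_zero_iff]

theorem eval_reflect_inv_mul_pow {Q : ℂ[X]} {m : ℕ} (hQ : Q.natDegree ≤ m) {z : ℂ}
    (hz : z ≠ 0) : (reflect m Q).eval z⁻¹ * z ^ m = Q.eval z := by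
  have := invertibleOfNonzero hz
  simpa only [invOf_eq_inv, eval₂_id] using eval₂_reflect_mul_pow (RingHom.id ℂ) z m Q hQ

theorem norm_eval_reflect_le_maxMod {Q : ℂ[X]} {m : ℕ} (hQ : Q.natDegree ≤ m) {w : ℂ}
    (hw : ‖w‖ ≤ 1) : ‖(reflect m Q).eval w‖ ≤ maxMod Q := by
  refine (norm_eval_le_maxMod_of_norm_le_one _ hw).trans (maxMod_le _ fun u hu => ?_)
  have hu0 : u ≠ 0 := norm_ne_zero_iff.mp (by simp [hu])
  have hmod := eval_reflect_inv_mul_pow hQ (inv_ne_zero hu0)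
  rw [inv_inv] at hmod
  calc ‖(reflect m Q).eval u‖ = ‖(reflect m Q).eval u * u⁻¹ ^ m‖ := by simp [hu]
    _ = ‖Q.eval u⁻¹‖ := by rw [hmod]
    _ ≤ maxMod Q := norm_eval_le_maxMod Q (by simp [hu])

theorem norm_coeff_le_maxMod {Q : ℂ[X]} {m : ℕ} (hQ : Q.natDegree ≤ m) :
    ‖Q.coeff m‖ ≤ maxMod Q := by
  simpa [← coeff_zero_eq_eval_zero, coeff_reflect] using
    norm_eval_reflect_le_maxMod hQ (w := 0) (by simp)

theorem norm_eval_le_pow_mul_maxMod {Q : ℂ[X]} {m : ℕ} (hQ : Q.natDegree ≤ m) {z : ℂ}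
    (hz : 1 ≤ ‖z‖) : ‖Q.eval z‖ ≤ ‖z‖ ^ m * maxMod Q := by
  have hz0 : z ≠ 0 := norm_pos_iff.mp (by linarith)
  rw [← eval_reflect_inv_mul_pow hQ hz0, norm_mul, norm_pow, mul_comm]
  gcongr
  exact norm_eval_reflect_le_maxMod hQ (by simpa using inv_le_one_of_one_le₀ hz)

theorem rootSet_sub_subset_ball_of_maxMod_lt {Q : ℂ[X]} {m : ℕ} (hQ : Q.natDegree ≤ m)
    {c : ℂ} (hc : maxMod Q < ‖c‖) : (C c * X ^ m - Q).rootSet ℂ ⊆ ball 0 1 := by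
  intro x hx
  rw [mem_rootSet, coe_aeval_eq_eval, eval_sub, eval_mul, eval_C, eval_pow, eval_X,
    sub_eq_zero] at hx
  rw [mem_ball_zero_iff]
  by_contra! hx1
  have hgrowth := norm_eval_le_pow_mul_maxMod hQ hx1
  rw [← hx.2, norm_mul, norm_pow, mul_comm] at hgrowth
  exact hc.not_ge (le_of_mul_le_mul_left hgrowth (by positivity))

theorem eval_derivative_ne_zero_of_rootSet_subset_convex {P : ℂ[X]} (hP : 0 < P.degree)
    {s : Set ℂ} (hs : Convex ℝ s) (hroots : P.rootSet ℂ ⊆ s) {z : ℂ} (hz : z ∉ s) :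
    (derivative P).eval z ≠ 0 := by
  intro hz0
  have hP' : derivative P ≠ 0 := by
    rw [Ne, derivative_eq_zero, ← Ne, ← Nat.pos_iff_ne_zero]
    exact natDegree_pos_iff_degree_pos.mpr hP
  have hmem : z ∈ (derivative P).rootSet ℂ := by
    rw [mem_rootSet, coe_aeval_eq_eval]
    exact ⟨hP', hz0⟩
  exact hz (convexHull_min hroots hs (rootSet_derivative_subset_convexHull_rootSet hP hmem))

theorem norm_eval_derivative_le {Q : ℂ[X]} {m : ℕ} (hQ : Q.natDegree ≤ m) {z : ℂ}
    (hz : 1 ≤ ‖z‖) : ‖(derivative Q).eval z‖ ≤ m * ‖z‖ ^ (m - 1) * maxMod Q := by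
  rcases Nat.eq_zero_or_pos m with rfl | hm
  · simp [derivative_of_natDegree_zero (Nat.le_zero.mp hQ)]
  by_contra! hlt
  have hz0 : z ≠ 0 := norm_pos_iff.mp (by linarith)
  have hm0 : (m : ℂ) ≠ 0 := by exact_mod_cast hm.ne'
  set c := (derivative Q).eval z / (m * z ^ (m - 1))
  have hc : maxMod Q < ‖c‖ := by
    rw [norm_div, norm_mul, norm_pow, Complex.norm_natCast, lt_div_iff₀ (by positivity)]
    linarith
  have hcoeff : (C c * X ^ m - Q).coeff m ≠ 0 := by
    rw [coeff_sub, coeff_C_mul_X_pow, if_pos rfl, sub_ne_zero]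
    intro hcQ
    exact (norm_coeff_le_maxMod hQ).not_gt (hcQ ▸ hc)
  have hdeg : 0 < (C c * X ^ m - Q).degree :=
    lt_of_lt_of_le (by exact_mod_cast hm) (le_degree_of_ne_zero hcoeff)
  refine eval_derivative_ne_zero_of_rootSet_subset_convex hdeg (convex_ball 0 1)
    (rootSet_sub_subset_ball_of_maxMod_lt hQ hc) (by simpa using hz) ?_
  simp only [derivative_sub, derivative_C_mul_X_pow, eval_sub, eval_mul, eval_C, eval_pow,
    eval_X, c]
  field_simp
  ring

theorem natDegree_X_mul_derivative_le {R : Type*} [Semiring R] (P : R[X]) :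
    (X * derivative P).natDegree ≤ P.natDegree := by
  by_cases hP : P.natDegree = 0
  · simp [derivative_of_natDegree_zero hP]
  · have := natDegree_derivative_le P
    have := (natDegree_mul_le (p := X) (q := derivative P)).trans
      (Nat.add_le_add_right natDegree_X_le _)
    omega

theorem deriv_combination_bound_general (P : Polynomial ℂ) (n : ℕ)
    (hdeg : P.natDegree = n) (r : ℝ) (hr : 1 ≤ r) :
    ∀ z : ℂ, ‖z‖ = r →
      ‖z * (Polynomial.derivative (Polynomial.derivative P)).eval z
          + (Polynomial.derivative P).eval z‖
        ≤ (n : ℝ) ^ 2 * r ^ (n - 1) * maxMod P := by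
  intro z hz
  have hS : (X * derivative P).natDegree ≤ n := hdeg ▸ natDegree_X_mul_derivative_le P
  have hSmax : maxMod (X * derivative P) ≤ n * maxMod P := maxMod_le _ fun w hw => by
    simpa [hw] using norm_eval_derivative_le hdeg.le hw.ge
  have hderiv : (derivative (X * derivative P)).eval z
      = z * (derivative (derivative P)).eval z + (derivative P).eval z := by
    simp only [derivative_mul, derivative_X, eval_add, eval_mul, eval_X, one_mul]
    ring
  calc _ = ‖(derivative (X * derivative P)).eval z‖ := by rw [hderiv]
    _ ≤ n * r ^ (n - 1) * maxMod (X * derivative P) :=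
      hz ▸ norm_eval_derivative_le hS (hz ▸ hr)
    _ ≤ n * r ^ (n - 1) * (n * maxMod P) := by gcongr
    _ = _ := by ring

/-- `max_(|z|=r) |z P''(z) + P'(z)| ≤ n² r^(n-1) max_(|z|=1) |P(z)|` for `r ≥ 1`. -/
theorem deriv_combination_bound (P : Polynomial ℂ) (n : ℕ) (hn : 1 ≤ n)
    (hdeg : P.natDegree = n) (r : ℝ) (hr : 1 ≤ r) :
    ∀ z : ℂ, ‖z‖ = r →
      ‖z * (Polynomial.derivative (Polynomial.derivative P)).eval z
          + (Polynomial.derivative P).eval z‖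
        ≤ (n : ℝ) ^ 2 * r ^ (n - 1) * maxMod P :=
  deriv_combination_bound_general P n hdeg r hr
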